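/- (Equivalence guarantee.) Let p, ε, γ ∈ (0,1) with γ < 1 − p, and set n = ⌈ln(1/ε)/(2γ²)⌉ and d_max = ⌊n(1 − p)⌋. Let (Ω, P) be a probability space and let X_1, …, X_n be independent, identically distributed {0,1}-valued random variables with P[X_i = 1] = q for all i. If q > 1 − p + γ, then P[∑_{i=1}^n X_i ≤ d_max] ≤ ε. Equivalently, on any run in which the number of disagreements among the n samples is at most d_max, one may conclude with probability at least 1 − ε over the sampling that q ≤ 1 − p + γ, i.e., that the agreement probability 1 − q is at least p − γ. -/

import Mathlib

/-!
Each `q - Xᵢ` is centred and takes values in an interval of length one, so by Hoeffding's lemma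
it is `1/4`-sub-Gaussian, and Hoeffding's inequality bounds the probability that the number of
disagreements falls `nγ` below its mean `nq` by `exp (-2nγ²)`. Since `q - γ > 1 - p`, acceptance
`∑ Xᵢ ≤ ⌊n(1 - p)⌋` is such an event, and the choice of `n` makes `exp (-2nγ²) ≤ ε`.
-/

open MeasureTheory ProbabilityTheory Real

namespace ProbabilityTheory

variable {Ω : Type*} [MeasurableSpace Ω] {μ : Measure Ω}

lemma integral_eq_measureReal_of_forall_eq_zero_or_one {X : Ω → ℝ} (hX : Measurable X)
    (hval : ∀ ω, X ω = 0 ∨ X ω = 1) : μ[X] = μ.real {ω | X ω = 1} := by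
  have hind : X = (X ⁻¹' {1}).indicator 1 := by
    ext ω
    rcases hval ω with h | h <;> simp [h]
  conv_lhs => rw [hind]
  exact integral_indicator_one (hX (measurableSet_singleton 1))

lemma measureReal_sum_le_sum_integral_sub_le {ι : Type*} [Fintype ι] [IsProbabilityMeasure μ]
    {X : ι → Ω → ℝ} (hindep : iIndepFun X μ) (hmeas : ∀ i, Measurable (X i))
    (hX : ∀ i ω, X i ω ∈ Set.Icc 0 1) {γ : ℝ} (hγ : 0 ≤ γ) :
    μ.real {ω | ∑ i, X i ω ≤ ∑ i, μ[X i] - Fintype.card ι * γ}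
      ≤ exp (-2 * Fintype.card ι * γ ^ 2) := by
  set n : ℕ := Fintype.card ι
  have hsubG : ∀ i ∈ Finset.univ,
      HasSubgaussianMGF (fun ω ↦ μ[X i] - X i ω) ((‖(1 : ℝ) - 0‖₊ / 2) ^ 2) μ :=
    fun i _ ↦
      (hasSubgaussianMGF_of_mem_Icc (hmeas i).aemeasurable (ae_of_all _ (hX i))).neg.congr
        (ae_of_all _ fun ω ↦ by simp)
  have hindep' : iIndepFun (fun i ω ↦ μ[X i] - X i ω) μ :=
    hindep.comp (fun i (x : ℝ) ↦ ∫ ω, X i ω ∂μ - x) fun _ ↦ by fun_prop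
  have hoeffding := HasSubgaussianMGF.measure_sum_ge_le_of_iIndepFun hindep' hsubG
    (mul_nonneg n.cast_nonneg hγ)
  calc μ.real {ω | ∑ i, X i ω ≤ ∑ i, μ[X i] - n * γ}
      = μ.real {ω | n * γ ≤ ∑ i, (μ[X i] - X i ω)} := by
        simp only [Finset.sum_sub_distrib]
        congr 1; ext ω; simp only [Set.mem_ofPred_eq]; constructor <;> intro h <;> linarith
    _ ≤ _ := hoeffding
    _ = exp (-2 * n * γ ^ 2) := by
        congr 1
        rcases eq_or_ne n 0 with hn | hn
        · simp [hn]
        · simp [n]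
          field_simp

end ProbabilityTheory

lemma exp_neg_two_mul_mul_sq_le {ε γ N : ℝ} (hε : 0 < ε) (hγ : γ ≠ 0)
    (hN : log (1 / ε) / (2 * γ ^ 2) ≤ N) : exp (-2 * N * γ ^ 2) ≤ ε := by
  rw [div_le_iff₀ (by positivity), one_div, log_inv] at hN
  calc exp (-2 * N * γ ^ 2) ≤ exp (log ε) := exp_le_exp.mpr (by linarith)
    _ = ε := exp_log hε

theorem equivalence_guarantee_general {Ω : Type*} [MeasurableSpace Ω] (P : Measure Ω)
    [IsProbabilityMeasure P] (p ε γ : ℝ)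
    (hε : ε ∈ Set.Ioo (0:ℝ) 1) (hγ : γ ∈ Set.Ioo (0:ℝ) 1)
    (hγp : γ < 1 - p)
    (n : ℕ) (hn : n = ⌈Real.log (1 / ε) / (2 * γ ^ 2)⌉₊)
    (dmax : ℕ) (hdmax : dmax = ⌊(n : ℝ) * (1 - p)⌋₊)
    (X : Fin n → Ω → ℝ)
    (hmeas : ∀ i, Measurable (X i))
    (hval : ∀ i ω, X i ω = 0 ∨ X i ω = 1)
    (hindep : iIndepFun X P)
    (q : ℝ) (hdist : ∀ i, P {ω | X i ω = 1} = ENNReal.ofReal q)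
    (hq : q > 1 - p + γ) :
    P {ω | ∑ i, X i ω ≤ (dmax : ℝ)} ≤ ENNReal.ofReal ε := by
  have hmean : ∀ i, P[X i] = q := fun i ↦ by
    rw [integral_eq_measureReal_of_forall_eq_zero_or_one (hmeas i) (hval i), measureReal_def,
      hdist i, ENNReal.toReal_ofReal (by linarith [hγ.1])]
  have hdmax_le : (dmax : ℝ) ≤ ∑ i, P[X i] - Fintype.card (Fin n) * γ := by
    simp only [hmean, Finset.sum_const, Finset.card_univ, Fintype.card_fin, nsmul_eq_mul,
      ← mul_sub]
    calc (dmax : ℝ) ≤ n * (1 - p) :=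
          hdmax ▸ Nat.floor_le (mul_nonneg n.cast_nonneg (by linarith [hγ.1]))
      _ ≤ n * (q - γ) := mul_le_mul_of_nonneg_left (by linarith) n.cast_nonneg
  have hbern : ∀ i ω, X i ω ∈ Set.Icc 0 1 := fun i ω ↦ by
    rcases hval i ω with h | h <;> simp [h]
  rw [← ofReal_measureReal, ENNReal.ofReal_le_ofReal_iff hε.1.le]
  calc P.real {ω | ∑ i, X i ω ≤ (dmax : ℝ)}
      ≤ P.real {ω | ∑ i, X i ω ≤ ∑ i, P[X i] - Fintype.card (Fin n) * γ} :=
        measureReal_mono fun _ hω ↦ le_trans hω hdmax_le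
    _ ≤ exp (-2 * Fintype.card (Fin n) * γ ^ 2) :=
        measureReal_sum_le_sum_integral_sub_le hindep hmeas hbern hγ.1.le
    _ ≤ ε := exp_neg_two_mul_mul_sq_le hε.1 hγ.1.ne' (by simpa [hn] using Nat.le_ceil _)

/-- **Equivalence guarantee.** Let `p, ε, γ ∈ (0,1)` with `γ < 1 - p`, let
`n = ⌈ln(1/ε)/(2γ²)⌉` and `d_max = ⌊n(1-p)⌋`. If `X₁, …, Xₙ` are i.i.d.
`{0,1}`-valued random variables with `P[Xᵢ = 1] = q` and `q > 1 - p + γ`, then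
`P[∑ Xᵢ ≤ d_max] ≤ ε`. -/
theorem equivalence_guarantee {Ω : Type*} [MeasurableSpace Ω] (P : Measure Ω)
    [IsProbabilityMeasure P] (p ε γ : ℝ)
    (hp : p ∈ Set.Ioo (0:ℝ) 1) (hε : ε ∈ Set.Ioo (0:ℝ) 1) (hγ : γ ∈ Set.Ioo (0:ℝ) 1)
    (hγp : γ < 1 - p)
    (n : ℕ) (hn : n = ⌈Real.log (1 / ε) / (2 * γ ^ 2)⌉₊)
    (dmax : ℕ) (hdmax : dmax = ⌊(n : ℝ) * (1 - p)⌋₊)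
    (X : Fin n → Ω → ℝ)
    (hmeas : ∀ i, Measurable (X i))
    (hval : ∀ i ω, X i ω = 0 ∨ X i ω = 1)
    (hindep : iIndepFun X P)
    (q : ℝ) (hdist : ∀ i, P {ω | X i ω = 1} = ENNReal.ofReal q)
    (hq : q > 1 - p + γ) :
    P {ω | ∑ i, X i ω ≤ (dmax : ℝ)} ≤ ENNReal.ofReal ε :=
  equivalence_guarantee_general P p ε γ hε hγ hγp n hn dmax hdmax X hmeas hval hindep q hdist hq
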